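/- Uniform convergence of the frozen-symbol potential minus the renormalization function: Let ρ be a Schwartz function on ℝ³, q = ρ̂(0), and a, A : ℝ³ → Sym(3,ℝ) measurable with C₀‖ξ‖² ≤ ξ·a(x)ξ ≤ C₁‖ξ‖² and C₀‖ξ‖² ≤ ξ·A(X)ξ ≤ C₁‖ξ‖², 0 < C₀ ≤ C₁. Define W^κ(X) = (2π)^{−3} ∫_{ℝ³} [ −c_X(X,ξ) + (1/2)K(X,ξ) d_X(X,ξ) ] |ρ̂(ξ/κ)|² dξ and E^κ(X) = −(1/2)(2π)^{−3} ∫_{ℝ³} (h₀(X,ξ)+1)^{−1/2} K(X,ξ)(K(X,ξ)+1)^{−2} |ρ̂(ξ/κ)|² dξ. Then all integrals converge absolutely and, as κ → ∞, W^κ(X) − E^κ(X) converges uniformly in X ∈ ℝ³ to L(X) = −|q|² (2π)^{−3} ∫_{ℝ³} (h₀(X,ξ)+1)^{−1/2}(K(X,ξ)+1)^{−2} dξ. -/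

import Mathlib

/-!
All integrals converge because the symbols are bounded and `|ρ̂(·/κ)|²` is integrable.
Since `c_X = (K + 1) d_X`, the symbol of `W^κ` is `-d_X - ½ K d_X`, so the divergent parts of
`W^κ` and `E^κ` cancel and `W^κ(X) - E^κ(X) - L(X) = (2π)⁻³ ∫ d_X(X,ξ) (|q|² - |ρ̂(ξ/κ)|²) dξ`.
Ellipticity gives `d_X(X,ξ) ≤ min(C₀,1)⁻² (1 + |ξ|²)⁻²`, which is integrable on `ℝ³` and
independent of `X`. The error is therefore bounded, uniformly in `X`, by a multiple of
`∫ (1 + |ξ|²)⁻² ||ρ̂(ξ/κ)|² - |ρ̂(0)|²| dξ`, which tends to `0` by dominated convergence since `ρ̂`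
is bounded and continuous.
-/

open MeasureTheory Filter

/-- The Fourier transform `ρ̂(ξ) = ∫ e^{-i x·ξ} ρ(x) dx` of a Schwartz function on ℝ³. -/
noncomputable def fourierHat (ρ : SchwartzMap (EuclideanSpace ℝ (Fin 3)) ℂ)
    (ξ : EuclideanSpace ℝ (Fin 3)) : ℂ :=
  ∫ x : EuclideanSpace ℝ (Fin 3),
    Complex.exp (-Complex.I * ((inner ℝ x ξ : ℝ) : ℂ)) * ρ x

/-- The quadratic form `ξ ↦ ξ · M(x) ξ` associated to a matrix-valued function. -/
def qform (M : EuclideanSpace ℝ (Fin 3) → Matrix (Fin 3) (Fin 3) ℝ)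
    (x ξ : EuclideanSpace ℝ (Fin 3)) : ℝ :=
  ∑ i, ∑ j, ξ i * M x i j * ξ j

open Real FourierTransform Topology

lemma fourierHat_eq_fourier (ρ : SchwartzMap (EuclideanSpace ℝ (Fin 3)) ℂ)
    (ξ : EuclideanSpace ℝ (Fin 3)) : fourierHat ρ ξ = 𝓕 ρ ((2 * π)⁻¹ • ξ) := by
  rw [SchwartzMap.fourier_coe, Real.fourier_eq']
  refine integral_congr_ae (Eventually.of_forall fun x => ?_)
  simp only [inner_smul_right, smul_eq_mul]
  congr 2
  push_cast
  field_simp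

lemma continuous_fourierHat (ρ : SchwartzMap (EuclideanSpace ℝ (Fin 3)) ℂ) :
    Continuous (fourierHat ρ) := by
  simp_rw [funext (fourierHat_eq_fourier ρ)]
  fun_prop

lemma abs_norm_fourierHat_sq_le (ρ : SchwartzMap (EuclideanSpace ℝ (Fin 3)) ℂ)
    (ξ : EuclideanSpace ℝ (Fin 3)) :
    |‖fourierHat ρ ξ‖ ^ 2| ≤ SchwartzMap.seminorm ℂ 0 0 (𝓕 ρ) ^ 2 := by
  rw [abs_of_nonneg (by positivity), fourierHat_eq_fourier]
  gcongr
  exact SchwartzMap.norm_le_seminorm ℂ _ _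

lemma integrable_norm_fourierHat_sq (ρ : SchwartzMap (EuclideanSpace ℝ (Fin 3)) ℂ) :
    Integrable fun ξ => ‖fourierHat ρ ξ‖ ^ 2 := by
  simp_rw [fourierHat_eq_fourier]
  exact (((𝓕 ρ).memLp 2).integrable_norm_pow two_ne_zero).comp_smul (R := (2 * π)⁻¹)
    (by positivity)

lemma continuous_qform (M : EuclideanSpace ℝ (Fin 3) → Matrix (Fin 3) (Fin 3) ℝ)
    (X : EuclideanSpace ℝ (Fin 3)) : Continuous (qform M X) := by
  unfold qform
  fun_prop

lemma exists_forall_abs_lt_of_le_mul_tendsto {ι : Type*} {F : ℝ → ι → ℝ} {G : ℝ → ℝ} {c : ℝ}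
    (hG : Tendsto G atTop (𝓝 0)) (hFG : ∀ κ, 1 ≤ κ → ∀ X, |F κ X| ≤ c * G κ) :
    ∀ ε, 0 < ε → ∃ κ₀, ∀ κ, κ₀ ≤ κ → ∀ X, |F κ X| < ε := by
  intro ε hε
  have hcG : Tendsto (fun κ => c * G κ) atTop (𝓝 0) := by simpa using hG.const_mul c
  obtain ⟨κ₀, hκ₀⟩ :=
    eventually_atTop.1 ((hcG.eventually_lt_const hε).and (eventually_ge_atTop 1))
  exact ⟨κ₀, fun κ hκ X => (hFG κ (hκ₀ κ hκ).2 X).trans_lt (hκ₀ κ hκ).1⟩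

lemma norm_mul_abs_sub_le {x y z C : ℝ} (hy : |y| ≤ C) (hz : |z| ≤ C) :
    ‖x * |y - z|‖ ≤ 2 * C * ‖x‖ := by
  rw [norm_mul, Real.norm_eq_abs, Real.norm_eq_abs, abs_abs, mul_comm (2 * C)]
  gcongr
  linarith [abs_sub y z]

section WeightedLimit

variable {E : Type*} [NormedAddCommGroup E] [NormedSpace ℝ E] [MeasurableSpace E]

lemma integrable_inv_one_add_norm_sq_sq [FiniteDimensional ℝ E] [BorelSpace E]
    {μ : Measure E} [μ.IsAddHaarMeasure] (hE : Module.finrank ℝ E < 4) :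
    Integrable (fun ξ : E => ((1 + ‖ξ‖ ^ 2) ^ 2)⁻¹) μ := by
  refine (integrable_rpow_neg_one_add_norm_sq (μ := μ) (r := 4) (by exact_mod_cast hE)).congr
    (Eventually.of_forall fun ξ => ?_)
  dsimp only
  rw [show -(4 : ℝ) / 2 = -(2 : ℕ) by norm_num, rpow_neg (by positivity), rpow_natCast]

variable [OpensMeasurableSpace E] {μ : Measure E} {w φ : E → ℝ} {C : ℝ}

lemma integrable_mul_abs_comp_inv_smul_sub (hw : Integrable w μ) (hφ : Continuous φ)
    (hφC : ∀ x, |φ x| ≤ C) (κ : ℝ) :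
    Integrable (fun ξ => w ξ * |φ (κ⁻¹ • ξ) - φ 0|) μ :=
  (hw.norm.const_mul (2 * C)).mono' (hw.aestronglyMeasurable.mul
      ((hφ.comp (continuous_const_smul κ⁻¹)).sub continuous_const).abs.aestronglyMeasurable)
    (ae_of_all _ fun _ => norm_mul_abs_sub_le (hφC _) (hφC 0))

lemma tendsto_integral_mul_abs_comp_inv_smul_sub (hw : Integrable w μ) (hφ : Continuous φ)
    (hφC : ∀ x, |φ x| ≤ C) :
    Tendsto (fun κ : ℝ => ∫ ξ, w ξ * |φ (κ⁻¹ • ξ) - φ 0| ∂μ) atTop (𝓝 0) := by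
  have hlim ξ : Tendsto (fun κ : ℝ => w ξ * |φ (κ⁻¹ • ξ) - φ 0|) atTop (𝓝 0) := by
    have hsmul : Tendsto (fun κ : ℝ => κ⁻¹ • ξ) atTop (𝓝 0) := by
      simpa using (tendsto_inv_atTop_zero (𝕜 := ℝ)).smul_const ξ
    simpa using (((hφ.tendsto 0).comp hsmul).sub_const (φ 0)).abs.const_mul (w ξ)
  simpa using tendsto_integral_filter_of_dominated_convergence (fun ξ => 2 * C * ‖w ξ‖)
    (F := fun κ ξ => w ξ * |φ (κ⁻¹ • ξ) - φ 0|)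
    (Eventually.of_forall fun κ =>
      (integrable_mul_abs_comp_inv_smul_sub hw hφ hφC κ).aestronglyMeasurable)
    (Eventually.of_forall fun κ => ae_of_all _ fun _ => norm_mul_abs_sub_le (hφC _) (hφC 0))
    (hw.norm.const_mul _) (Eventually.of_forall hlim)

end WeightedLimit

-- The paper's `c_X` and `d_X`, as functions of the values `x = h₀(X,ξ)` and `y = K(X,ξ)`.
noncomputable def symbolC (x y : ℝ) : ℝ := (√(x + 1))⁻¹ * (y + 1)⁻¹

noncomputable def symbolD (x y : ℝ) : ℝ := (√(x + 1))⁻¹ * ((y + 1) ^ 2)⁻¹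

lemma inv_sqrt_add_one_le_one {x : ℝ} (hx : 0 ≤ x) : (√(x + 1))⁻¹ ≤ 1 :=
  inv_le_one_of_one_le₀ (one_le_sqrt.2 (by linarith))

lemma symbolD_nonneg (x y : ℝ) : 0 ≤ symbolD x y := by
  unfold symbolD
  positivity

lemma symbolD_le {x y r : ℝ} (hx : 0 ≤ x) (hr : 0 < r) (hy : r ≤ y + 1) :
    symbolD x y ≤ (r ^ 2)⁻¹ := by
  unfold symbolD
  calc (√(x + 1))⁻¹ * ((y + 1) ^ 2)⁻¹ ≤ 1 * (r ^ 2)⁻¹ := by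
        gcongr
        exact inv_sqrt_add_one_le_one hx
    _ = (r ^ 2)⁻¹ := one_mul _

lemma abs_symbolD_le {x y t C₀ : ℝ} (hx : 0 ≤ x) (ht : 0 ≤ t) (hC₀ : 0 < C₀) (hy : C₀ * t ≤ y) :
    |symbolD x y| ≤ (min C₀ 1 ^ 2)⁻¹ * ((1 + t) ^ 2)⁻¹ := by
  rw [abs_of_nonneg (symbolD_nonneg _ _), ← mul_inv, ← mul_pow]
  exact symbolD_le hx (by positivity) (by nlinarith [min_le_left C₀ 1, min_le_right C₀ 1])

lemma abs_inv_sqrt_mul_mul_inv_sq_le_one {x y : ℝ} (hx : 0 ≤ x) (hy : 0 ≤ y) :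
    |(√(x + 1))⁻¹ * y * ((y + 1) ^ 2)⁻¹| ≤ 1 := by
  have hy' : y * ((y + 1) ^ 2)⁻¹ ≤ 1 := by
    rw [← div_eq_mul_inv, div_le_one (by positivity)]
    nlinarith
  rw [abs_of_nonneg (by positivity), mul_assoc]
  exact mul_le_one₀ (inv_sqrt_add_one_le_one hx) (by positivity) hy'

lemma neg_symbolC_add_half_mul_symbolD {x y : ℝ} (hy : y + 1 ≠ 0) :
    -symbolC x y + 1 / 2 * y * symbolD x y =
      -symbolD x y - 1 / 2 * ((√(x + 1))⁻¹ * y * ((y + 1) ^ 2)⁻¹) := by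
  unfold symbolC symbolD
  field_simp
  ring

section FrozenPotential

variable {α : Type*} [MeasurableSpace α] {μ : Measure α} {h K P : α → ℝ}

lemma Measurable.symbolD (hh : Measurable h) (hK : Measurable K) :
    Measurable fun ξ => symbolD (h ξ) (K ξ) := by
  unfold _root_.symbolD
  fun_prop

lemma integrable_symbolD_mul (hh : Measurable h) (hK : Measurable K) (h0 : ∀ ξ, 0 ≤ h ξ)
    (K0 : ∀ ξ, 0 ≤ K ξ) (hP : Integrable P μ) :
    Integrable (fun ξ => symbolD (h ξ) (K ξ) * P ξ) μ := by
  refine hP.bdd_mul (c := 1) (hh.symbolD hK).aestronglyMeasurable (ae_of_all _ fun ξ => ?_)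
  rw [Real.norm_eq_abs, abs_of_nonneg (symbolD_nonneg _ _)]
  simpa using symbolD_le (h0 ξ) one_pos (by linarith [K0 ξ])

lemma integrable_inv_sqrt_mul_mul_inv_sq_mul (hh : Measurable h) (hK : Measurable K)
    (h0 : ∀ ξ, 0 ≤ h ξ) (K0 : ∀ ξ, 0 ≤ K ξ) (hP : Integrable P μ) :
    Integrable (fun ξ => (√(h ξ + 1))⁻¹ * K ξ * ((K ξ + 1) ^ 2)⁻¹ * P ξ) μ :=
  hP.bdd_mul (c := 1) (by fun_prop)
    (ae_of_all _ fun ξ => abs_inv_sqrt_mul_mul_inv_sq_le_one (h0 ξ) (K0 ξ))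

lemma integrable_neg_symbolC_add_half_mul_symbolD_mul (hh : Measurable h) (hK : Measurable K)
    (h0 : ∀ ξ, 0 ≤ h ξ) (K0 : ∀ ξ, 0 ≤ K ξ) (hP : Integrable P μ) :
    Integrable (fun ξ => (-symbolC (h ξ) (K ξ) + 1 / 2 * K ξ * symbolD (h ξ) (K ξ)) * P ξ) μ := by
  refine ((integrable_symbolD_mul hh hK h0 K0 hP).neg.sub
    ((integrable_inv_sqrt_mul_mul_inv_sq_mul hh hK h0 K0 hP).const_mul (1 / 2))).congr
    (ae_of_all _ fun ξ => ?_)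
  simp only [Pi.sub_apply, Pi.neg_apply,
    neg_symbolC_add_half_mul_symbolD (by linarith [K0 ξ] : K ξ + 1 ≠ 0)]
  ring

lemma frozen_potential_sub_eq (c q : ℝ) (hh : Measurable h) (hK : Measurable K)
    (h0 : ∀ ξ, 0 ≤ h ξ) (K0 : ∀ ξ, 0 ≤ K ξ) (hP : Integrable P μ)
    (hD : Integrable (fun ξ => symbolD (h ξ) (K ξ)) μ) :
    c * (∫ ξ, (-symbolC (h ξ) (K ξ) + 1 / 2 * K ξ * symbolD (h ξ) (K ξ)) * P ξ ∂μ) -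
        (-(1 / 2) * c * ∫ ξ, (√(h ξ + 1))⁻¹ * K ξ * ((K ξ + 1) ^ 2)⁻¹ * P ξ ∂μ) -
        (-q * c * ∫ ξ, symbolD (h ξ) (K ξ) ∂μ) =
      c * ∫ ξ, symbolD (h ξ) (K ξ) * (q - P ξ) ∂μ := by
  have hDP := integrable_symbolD_mul hh hK h0 K0 hP
  have hEP := integrable_inv_sqrt_mul_mul_inv_sq_mul hh hK h0 K0 hP
  have hW : ∫ ξ, (-symbolC (h ξ) (K ξ) + 1 / 2 * K ξ * symbolD (h ξ) (K ξ)) * P ξ ∂μ =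
      -(∫ ξ, symbolD (h ξ) (K ξ) * P ξ ∂μ) -
        1 / 2 * ∫ ξ, (√(h ξ + 1))⁻¹ * K ξ * ((K ξ + 1) ^ 2)⁻¹ * P ξ ∂μ := by
    rw [← integral_neg, ← integral_const_mul,
      ← integral_sub (f := fun ξ => -(symbolD (h ξ) (K ξ) * P ξ)) hDP.neg (hEP.const_mul _)]
    refine integral_congr_ae (ae_of_all _ fun ξ => ?_)
    simp only [neg_symbolC_add_half_mul_symbolD (by linarith [K0 ξ] : K ξ + 1 ≠ 0)]
    ring
  have hL : ∫ ξ, symbolD (h ξ) (K ξ) * (q - P ξ) ∂μ =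
      q * ∫ ξ, symbolD (h ξ) (K ξ) ∂μ - ∫ ξ, symbolD (h ξ) (K ξ) * P ξ ∂μ := by
    simp_rw [mul_sub]
    rw [integral_sub (hD.mul_const q) hDP, integral_mul_const, mul_comm]
  rw [hW, hL]
  ring

lemma abs_integral_mul_sub_le {d w : α → ℝ} {B q : ℝ} (hdw : ∀ ξ, |d ξ| ≤ B * w ξ)
    (hwP : Integrable (fun ξ => w ξ * |P ξ - q|) μ) :
    |∫ ξ, d ξ * (q - P ξ) ∂μ| ≤ B * ∫ ξ, w ξ * |P ξ - q| ∂μ := by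
  rw [← integral_const_mul, ← Real.norm_eq_abs]
  refine norm_integral_le_of_norm_le (hwP.const_mul B) (ae_of_all _ fun ξ => ?_)
  rw [norm_mul, Real.norm_eq_abs, Real.norm_eq_abs, abs_sub_comm, ← mul_assoc]
  gcongr
  exact hdw ξ

lemma abs_frozen_potential_sub_le {w : α → ℝ} {c q B : ℝ} (hc : 0 ≤ c) (hh : Measurable h)
    (hK : Measurable K) (h0 : ∀ ξ, 0 ≤ h ξ) (K0 : ∀ ξ, 0 ≤ K ξ) (hP : Integrable P μ)
    (hD : Integrable (fun ξ => symbolD (h ξ) (K ξ)) μ)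
    (hDw : ∀ ξ, |symbolD (h ξ) (K ξ)| ≤ B * w ξ)
    (hwP : Integrable (fun ξ => w ξ * |P ξ - q|) μ) :
    |c * (∫ ξ, (-symbolC (h ξ) (K ξ) + 1 / 2 * K ξ * symbolD (h ξ) (K ξ)) * P ξ ∂μ) -
        (-(1 / 2) * c * ∫ ξ, (√(h ξ + 1))⁻¹ * K ξ * ((K ξ + 1) ^ 2)⁻¹ * P ξ ∂μ) -
        (-q * c * ∫ ξ, symbolD (h ξ) (K ξ) ∂μ)| ≤
      c * B * ∫ ξ, w ξ * |P ξ - q| ∂μ := by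
  rw [frozen_potential_sub_eq c q hh hK h0 K0 hP hD, abs_mul, abs_of_nonneg hc, mul_assoc]
  gcongr
  exact abs_integral_mul_sub_le hDw hwP

end FrozenPotential

theorem frozen_symbol_potential_uniform_convergence_general
    (ρ : SchwartzMap (EuclideanSpace ℝ (Fin 3)) ℂ)
    (a A : EuclideanSpace ℝ (Fin 3) → Matrix (Fin 3) (Fin 3) ℝ)
    (C₀ C₁ : ℝ) (hC₀ : 0 < C₀)
    (ha_ell : ∀ x ξ : EuclideanSpace ℝ (Fin 3),
      C₀ * ‖ξ‖ ^ 2 ≤ qform a x ξ ∧ qform a x ξ ≤ C₁ * ‖ξ‖ ^ 2)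
    (hA_ell : ∀ X ξ : EuclideanSpace ℝ (Fin 3),
      C₀ * ‖ξ‖ ^ 2 ≤ qform A X ξ ∧ qform A X ξ ≤ C₁ * ‖ξ‖ ^ 2) :
    (∀ κ : ℝ, 1 ≤ κ → ∀ X : EuclideanSpace ℝ (Fin 3),
      Integrable (fun ξ : EuclideanSpace ℝ (Fin 3) =>
        (-((Real.sqrt (qform a X ξ + 1))⁻¹ * (qform A X ξ + 1)⁻¹) +
            1 / 2 * qform A X ξ *
              ((Real.sqrt (qform a X ξ + 1))⁻¹ * ((qform A X ξ + 1) ^ 2)⁻¹)) *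
          ‖fourierHat ρ (κ⁻¹ • ξ)‖ ^ 2) ∧
      Integrable (fun ξ : EuclideanSpace ℝ (Fin 3) =>
        (Real.sqrt (qform a X ξ + 1))⁻¹ * qform A X ξ * ((qform A X ξ + 1) ^ 2)⁻¹ *
          ‖fourierHat ρ (κ⁻¹ • ξ)‖ ^ 2)) ∧
    (∀ X : EuclideanSpace ℝ (Fin 3),
      Integrable (fun ξ : EuclideanSpace ℝ (Fin 3) =>
        (Real.sqrt (qform a X ξ + 1))⁻¹ * ((qform A X ξ + 1) ^ 2)⁻¹)) ∧
    ∀ ε : ℝ, 0 < ε → ∃ κ₀ : ℝ, ∀ κ : ℝ, κ₀ ≤ κ → ∀ X : EuclideanSpace ℝ (Fin 3),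
      |((2 * Real.pi) ^ 3 : ℝ)⁻¹ *
            (∫ ξ : EuclideanSpace ℝ (Fin 3),
              (-((Real.sqrt (qform a X ξ + 1))⁻¹ * (qform A X ξ + 1)⁻¹) +
                  1 / 2 * qform A X ξ *
                    ((Real.sqrt (qform a X ξ + 1))⁻¹ * ((qform A X ξ + 1) ^ 2)⁻¹)) *
                ‖fourierHat ρ (κ⁻¹ • ξ)‖ ^ 2) -
          (-(1 / 2) * ((2 * Real.pi) ^ 3 : ℝ)⁻¹ *
            ∫ ξ : EuclideanSpace ℝ (Fin 3),
              (Real.sqrt (qform a X ξ + 1))⁻¹ * qform A X ξ * ((qform A X ξ + 1) ^ 2)⁻¹ *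
                ‖fourierHat ρ (κ⁻¹ • ξ)‖ ^ 2) -
          (-(‖fourierHat ρ 0‖ ^ 2) * ((2 * Real.pi) ^ 3 : ℝ)⁻¹ *
            ∫ ξ : EuclideanSpace ℝ (Fin 3),
              (Real.sqrt (qform a X ξ + 1))⁻¹ * ((qform A X ξ + 1) ^ 2)⁻¹)| < ε := by
  set m := min C₀ 1
  set w : EuclideanSpace ℝ (Fin 3) → ℝ := fun ξ => ((1 + ‖ξ‖ ^ 2) ^ 2)⁻¹
  have hw : Integrable w := integrable_inv_one_add_norm_sq_sq (by simp)
  have h0 X ξ : 0 ≤ qform a X ξ := (by positivity : 0 ≤ C₀ * ‖ξ‖ ^ 2).trans (ha_ell X ξ).1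
  have K0 X ξ : 0 ≤ qform A X ξ := (by positivity : 0 ≤ C₀ * ‖ξ‖ ^ 2).trans (hA_ell X ξ).1
  have hqa X := (continuous_qform a X).measurable
  have hqA X := (continuous_qform A X).measurable
  have hD X ξ : |symbolD (qform a X ξ) (qform A X ξ)| ≤ (m ^ 2)⁻¹ * w ξ :=
    abs_symbolD_le (h0 X ξ) (by positivity) hC₀ (hA_ell X ξ).1
  have hDint X : Integrable fun ξ => symbolD (qform a X ξ) (qform A X ξ) :=
    (hw.const_mul _).mono' ((hqa X).symbolD (hqA X)).aestronglyMeasurable (ae_of_all _ (hD X))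
  have hP κ (hκ : 1 ≤ κ) : Integrable fun ξ => ‖fourierHat ρ (κ⁻¹ • ξ)‖ ^ 2 :=
    (integrable_norm_fourierHat_sq ρ).comp_smul (inv_ne_zero (by positivity))
  have hφ : Continuous fun η => ‖fourierHat ρ η‖ ^ 2 := (continuous_fourierHat ρ).norm.pow 2
  refine ⟨fun κ hκ X =>
    ⟨integrable_neg_symbolC_add_half_mul_symbolD_mul (hqa X) (hqA X) (h0 X) (K0 X) (hP κ hκ),
      integrable_inv_sqrt_mul_mul_inv_sq_mul (hqa X) (hqA X) (h0 X) (K0 X) (hP κ hκ)⟩,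
    hDint, exists_forall_abs_lt_of_le_mul_tendsto (c := ((2 * π) ^ 3)⁻¹ * (m ^ 2)⁻¹)
      (tendsto_integral_mul_abs_comp_inv_smul_sub hw hφ (abs_norm_fourierHat_sq_le ρ))
      fun κ hκ X => ?_⟩
  exact abs_frozen_potential_sub_le (by positivity) (hqa X) (hqA X) (h0 X) (K0 X) (hP κ hκ)
    (hDint X) (hD X) (integrable_mul_abs_comp_inv_smul_sub hw hφ (abs_norm_fourierHat_sq_le ρ) κ)

/-- Uniform convergence of the frozen-symbol potential minus the renormalization
function: with `c_X(X,ξ) = (h₀(X,ξ)+1)^{-1/2}(K(X,ξ)+1)^{-1}` and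
`d_X(X,ξ) = (h₀(X,ξ)+1)^{-1/2}(K(X,ξ)+1)^{-2}`, the potentials
`W^κ(X) = (2π)^{-3}∫ [-c_X(X,ξ) + (1/2)K(X,ξ)d_X(X,ξ)] |ρ̂(ξ/κ)|² dξ` and
`E^κ(X) = -(1/2)(2π)^{-3}∫ (h₀(X,ξ)+1)^{-1/2}K(X,ξ)(K(X,ξ)+1)^{-2}|ρ̂(ξ/κ)|² dξ`
are absolutely convergent and `W^κ - E^κ` converges uniformly in `X` to
`L(X) = -|q|²(2π)^{-3}∫ (h₀(X,ξ)+1)^{-1/2}(K(X,ξ)+1)^{-2} dξ`, `q = ρ̂(0)`. -/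
theorem frozen_symbol_potential_uniform_convergence
    (ρ : SchwartzMap (EuclideanSpace ℝ (Fin 3)) ℂ)
    (a A : EuclideanSpace ℝ (Fin 3) → Matrix (Fin 3) (Fin 3) ℝ)
    (C₀ C₁ : ℝ) (hC₀ : 0 < C₀) (hC₀₁ : C₀ ≤ C₁)
    (ha_symm : ∀ x, (a x).IsSymm) (hA_symm : ∀ X, (A X).IsSymm)
    (ha_meas : ∀ i j, Measurable fun x => a x i j)
    (hA_meas : ∀ i j, Measurable fun X => A X i j)
    (ha_ell : ∀ x ξ : EuclideanSpace ℝ (Fin 3),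
      C₀ * ‖ξ‖ ^ 2 ≤ qform a x ξ ∧ qform a x ξ ≤ C₁ * ‖ξ‖ ^ 2)
    (hA_ell : ∀ X ξ : EuclideanSpace ℝ (Fin 3),
      C₀ * ‖ξ‖ ^ 2 ≤ qform A X ξ ∧ qform A X ξ ≤ C₁ * ‖ξ‖ ^ 2) :
    (∀ κ : ℝ, 1 ≤ κ → ∀ X : EuclideanSpace ℝ (Fin 3),
      Integrable (fun ξ : EuclideanSpace ℝ (Fin 3) =>
        (-((Real.sqrt (qform a X ξ + 1))⁻¹ * (qform A X ξ + 1)⁻¹) +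
            1 / 2 * qform A X ξ *
              ((Real.sqrt (qform a X ξ + 1))⁻¹ * ((qform A X ξ + 1) ^ 2)⁻¹)) *
          ‖fourierHat ρ (κ⁻¹ • ξ)‖ ^ 2) ∧
      Integrable (fun ξ : EuclideanSpace ℝ (Fin 3) =>
        (Real.sqrt (qform a X ξ + 1))⁻¹ * qform A X ξ * ((qform A X ξ + 1) ^ 2)⁻¹ *
          ‖fourierHat ρ (κ⁻¹ • ξ)‖ ^ 2)) ∧
    (∀ X : EuclideanSpace ℝ (Fin 3),
      Integrable (fun ξ : EuclideanSpace ℝ (Fin 3) =>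
        (Real.sqrt (qform a X ξ + 1))⁻¹ * ((qform A X ξ + 1) ^ 2)⁻¹)) ∧
    ∀ ε : ℝ, 0 < ε → ∃ κ₀ : ℝ, ∀ κ : ℝ, κ₀ ≤ κ → ∀ X : EuclideanSpace ℝ (Fin 3),
      |((2 * Real.pi) ^ 3 : ℝ)⁻¹ *
            (∫ ξ : EuclideanSpace ℝ (Fin 3),
              (-((Real.sqrt (qform a X ξ + 1))⁻¹ * (qform A X ξ + 1)⁻¹) +
                  1 / 2 * qform A X ξ *
                    ((Real.sqrt (qform a X ξ + 1))⁻¹ * ((qform A X ξ + 1) ^ 2)⁻¹)) *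
                ‖fourierHat ρ (κ⁻¹ • ξ)‖ ^ 2) -
          (-(1 / 2) * ((2 * Real.pi) ^ 3 : ℝ)⁻¹ *
            ∫ ξ : EuclideanSpace ℝ (Fin 3),
              (Real.sqrt (qform a X ξ + 1))⁻¹ * qform A X ξ * ((qform A X ξ + 1) ^ 2)⁻¹ *
                ‖fourierHat ρ (κ⁻¹ • ξ)‖ ^ 2) -
          (-(‖fourierHat ρ 0‖ ^ 2) * ((2 * Real.pi) ^ 3 : ℝ)⁻¹ *
            ∫ ξ : EuclideanSpace ℝ (Fin 3),
              (Real.sqrt (qform a X ξ + 1))⁻¹ * ((qform A X ξ + 1) ^ 2)⁻¹)| < ε :=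
  frozen_symbol_potential_uniform_convergence_general ρ a A C₀ C₁ hC₀ ha_ell hA_ell
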